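/- arXiv:1806.07762 — 4 statements merged into one kernel-verified Lean document; each statement's English description precedes it below -/
import Mathlib

section
/- Let m be a positive integer. Then λ(2m) = (-1)^{m-1} ( π^{2m}/(4·(2m)!) + Σ_{k=1}^{m-1} (-1)^{m-k} · π^{2k}/((2k+1)!) · λ(2m-2k) ). -/
/-!
Euler's evaluation of `ζ(2k)` together with `λ(s) = (1 - 2⁻ˢ) ζ(s)` gives
`λ(2k) = (-1)^(k+1) π^(2k) (4^k - 1) B_{2k} / (2 (2k)!)`, which turns the recurrence into the
Bernoulli-number identity `∑_{j=1}^m (4^j - 1) C(2m+1, 2j) B_{2j} = (2m+1)/2`. For odd `n`, the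
symmetry `B_n(1 - x) = (-1)^n B_n(x)` forces `B_n(1/2) = 0`, i.e. `∑ C(n,i) 2^i B_i = 0`;
subtracting `∑ C(n,i) B_i = 0` and using that `B_i` vanishes at odd `i > 1` leaves exactly that
identity for `n = 2m + 1`.
-/

open Real Finset

/-- The Dirichlet lambda function at a natural-number argument `j`:
`λ(j) = ∑_{n=0}^∞ 1/(2n+1)^j`. -/
noncomputable def dirichletLambda (j : ℕ) : ℝ := ∑' n : ℕ, 1 / (2 * (n : ℝ) + 1) ^ j

open Nat

theorem Polynomial.bernoulli_eval_one_half_of_odd {n : ℕ} (hn : Odd n) :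
    (bernoulli n).eval (1 / 2) = 0 := by
  have h := bernoulli_eval_one_sub n (1 / 2)
  rw [hn.neg_one_pow] at h
  norm_num at h
  linarith

theorem sum_range_choose_mul_two_pow_mul_bernoulli_of_odd {n : ℕ} (hn : Odd n) :
    ∑ i ∈ range (n + 1), (n.choose i : ℚ) * 2 ^ i * bernoulli i = 0 := by
  have h := Polynomial.bernoulli_eval_one_half_of_odd hn
  simp only [Polynomial.bernoulli, Polynomial.eval_finsetSum, Polynomial.eval_monomial] at h
  calc ∑ i ∈ range (n + 1), (n.choose i : ℚ) * 2 ^ i * bernoulli i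
      = 2 ^ n * ∑ i ∈ range (n + 1), bernoulli i * n.choose i * (1 / 2) ^ (n - i) := by
        rw [mul_sum]
        refine sum_congr rfl fun i hi => ?_
        obtain ⟨d, rfl⟩ := Nat.exists_eq_add_of_le (mem_range_succ_iff.1 hi)
        rw [Nat.add_sub_cancel_left, pow_add, one_div, inv_pow]
        field_simp
    _ = 0 := by rw [h, mul_zero]

theorem Finset.sum_range_two_mul {M : Type*} [AddCommMonoid M] (f : ℕ → M) (n : ℕ) :
    ∑ i ∈ range (2 * n), f i = ∑ i ∈ range n, (f (2 * i) + f (2 * i + 1)) := by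
  induction n with
  | zero => simp
  | succ n ih => rw [mul_add_one, sum_range_succ, sum_range_succ, sum_range_succ, ih, add_assoc]

theorem sum_range_four_pow_sub_one_mul_choose_mul_bernoulli {m : ℕ} (hm : m ≠ 0) :
    ∑ j ∈ range m,
        ((4 : ℚ) ^ (j + 1) - 1) * (2 * m + 1).choose (2 * (j + 1)) * bernoulli (2 * (j + 1)) =
      (2 * m + 1) / 2 := by
  set f : ℕ → ℚ := fun i => ((2 * m + 1).choose i : ℚ) * (2 ^ i - 1) * bernoulli i
  have hodd : Odd (2 * m + 1) := odd_two_mul_add_one m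
  have hf : ∑ i ∈ range (2 * (m + 1)), f i = 0 := by
    simp only [f, mul_sub, sub_mul, mul_one, sum_sub_distrib]
    rw [show 2 * (m + 1) = 2 * m + 1 + 1 by ring,
      sum_range_choose_mul_two_pow_mul_bernoulli_of_odd hodd, sum_range_succ, sum_bernoulli,
      if_neg (by omega), bernoulli_eq_zero_of_odd hodd (by omega)]
    simp
  have hf_odd (j : ℕ) : f (2 * (j + 1) + 1) = 0 := by
    simp [f, bernoulli_eq_zero_of_odd (odd_two_mul_add_one (j + 1)) (by omega)]
  have hf_even (j : ℕ) : f (2 * (j + 1)) =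
      ((4 : ℚ) ^ (j + 1) - 1) * (2 * m + 1).choose (2 * (j + 1)) * bernoulli (2 * (j + 1)) := by
    rw [show (4 : ℚ) ^ (j + 1) = 2 ^ (2 * (j + 1)) by rw [pow_mul]; norm_num]
    simp only [f]
    ring
  have hf_zero : f 0 = 0 := by simp [f]
  have hf_one : f 1 = -(2 * m + 1) / 2 := by
    simp [f, bernoulli_one]
    ring
  rw [sum_range_two_mul, sum_range_succ'] at hf
  simp only [hf_even, hf_odd, mul_zero, zero_add, hf_zero, hf_one, add_zero] at hf
  linarith

theorem dirichletLambda_eq_of_hasSum {p : ℕ} {z : ℝ}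
    (hz : HasSum (fun n : ℕ => 1 / (n : ℝ) ^ p) z) :
    dirichletLambda p = (1 - (2 ^ p)⁻¹) * z := by
  have h_even : HasSum (fun n : ℕ => 1 / ((2 * n : ℕ) : ℝ) ^ p) ((2 ^ p)⁻¹ * z) := by
    refine (hz.mul_left (2 ^ p)⁻¹).congr_fun fun n => ?_
    push_cast
    rw [mul_pow, one_div, one_div, mul_inv]
  have h_odd : HasSum (fun n : ℕ => 1 / ((2 * n + 1 : ℕ) : ℝ) ^ p) (dirichletLambda p) := by
    have hs := hz.summable.comp_injective (i := fun n => 2 * n + 1) fun a b h => by simpa using h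
    simpa [Function.comp_def, dirichletLambda] using hs.hasSum
  have := hz.unique (h_even.even_add_odd h_odd)
  linarith

noncomputable def lambdaCoeff (k : ℕ) : ℝ := (4 ^ k - 1) * bernoulli (2 * k) / (2 * k)!

theorem dirichletLambda_two_mul {k : ℕ} (hk : k ≠ 0) :
    dirichletLambda (2 * k) = (-1) ^ (k + 1) * π ^ (2 * k) * lambdaCoeff k / 2 := by
  have h_two_pow : (2 : ℝ) ^ (2 * k - 1) = 4 ^ k / 2 := by
    rw [eq_div_iff two_ne_zero, ← pow_succ, Nat.sub_add_cancel (by omega), pow_mul]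
    norm_num
  rw [dirichletLambda_eq_of_hasSum (hasSum_zeta_nat hk), h_two_pow, lambdaCoeff, pow_mul]
  field_simp
  norm_num
  ring

theorem sum_range_lambdaCoeff_div_factorial {m : ℕ} (hm : m ≠ 0) :
    ∑ k ∈ range m, lambdaCoeff (m - k) / (2 * k + 1)! = 1 / (2 * (2 * m)!) := by
  have h := congrArg (Rat.cast : ℚ → ℝ)
    (sum_range_four_pow_sub_one_mul_choose_mul_bernoulli hm)
  push_cast at h
  rw [← sum_range_reflect]
  have hterm : ∀ j ∈ range m, lambdaCoeff (m - (m - 1 - j)) / (2 * (m - 1 - j) + 1)! =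
      ((4 : ℝ) ^ (j + 1) - 1) * (2 * m + 1).choose (2 * (j + 1)) * bernoulli (2 * (j + 1)) /
        (2 * m + 1)! := by
    intro j hj
    have hj := mem_range.1 hj
    rw [show m - (m - 1 - j) = j + 1 by omega,
      show 2 * (m - 1 - j) + 1 = 2 * m + 1 - 2 * (j + 1) by omega,
      Nat.cast_choose ℝ (by omega : 2 * (j + 1) ≤ 2 * m + 1), lambdaCoeff]
    field_simp
  rw [sum_congr rfl hterm, ← sum_div, h, factorial_succ]
  push_cast
  field_simp

theorem neg_one_pow_mul_pi_pow_mul_dirichletLambda_two_mul_sub {m k : ℕ} (hkm : k < m) :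
    (-1) ^ (m - k) * π ^ (2 * k) * dirichletLambda (2 * m - 2 * k) =
      -(π ^ (2 * m) * lambdaCoeff (m - k) / 2) := by
  have hsign : (-1 : ℝ) ^ (m - k) * (-1) ^ (m - k + 1) = -1 := by
    rw [← pow_add, Odd.neg_one_pow ⟨m - k, by ring⟩]
  have hpi : π ^ (2 * m) = π ^ (2 * k) * π ^ (2 * (m - k)) := by
    rw [← pow_add]
    congr 1
    omega
  rw [show 2 * m - 2 * k = 2 * (m - k) by omega, dirichletLambda_two_mul (by omega), hpi]
  linear_combination (π ^ (2 * k) * π ^ (2 * (m - k)) * lambdaCoeff (m - k) / 2) * hsign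

theorem lambda_recurrence (m : ℕ) (hm : 0 < m) :
    dirichletLambda (2 * m) =
      (-1 : ℝ) ^ (m - 1) *
        (π ^ (2 * m) / (4 * (Nat.factorial (2 * m))) +
          ∑ k ∈ Finset.Icc 1 (m - 1),
            (-1 : ℝ) ^ (m - k) * π ^ (2 * k) / (Nat.factorial (2 * k + 1)) *
              dirichletLambda (2 * m - 2 * k)) := by
  have hsum := sum_range_lambdaCoeff_div_factorial hm.ne'
  rw [sum_range_eq_add_Ico _ hm,
    ← Icc_sub_one_right_eq_Ico_of_not_isMin (by simpa using hm.ne')] at hsum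
  simp only [Nat.sub_zero, mul_zero, zero_add, factorial_one, Nat.cast_one, div_one] at hsum
  have hterm : ∀ k ∈ Icc 1 (m - 1), (-1 : ℝ) ^ (m - k) * π ^ (2 * k) / (2 * k + 1)! *
      dirichletLambda (2 * m - 2 * k) =
        -(π ^ (2 * m) / 2) * (lambdaCoeff (m - k) / (2 * k + 1)!) := by
    intro k hk
    rw [div_mul_eq_mul_div, neg_one_pow_mul_pi_pow_mul_dirichletLambda_two_mul_sub (by grind)]
    ring
  rw [sum_congr rfl hterm, ← mul_sum, eq_sub_of_add_eq' hsum, dirichletLambda_two_mul hm.ne',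
    show m + 1 = m - 1 + 2 by omega, pow_add, neg_one_sq]
  ring
end

section
/- Let m be a nonnegative integer. Then Σ_{k=0}^{m} β(2k+1)·β(2m-2k+1) = (m + 1/2)·λ(2m+2). -/
open Real Finset

/-!
Multiplying out the partial sums `B_N(j) = ∑_{n<N} (-1)^n/(2n+1)^(2j+1)`, the sum over `k` of
`B_N(k) B_N(m-k)` becomes a double sum over `a, b < N` of geometric sums in `(2a+1)⁻²` and
`(2b+1)⁻²`. The diagonal `a = b` gives `(m+1) ∑ (2a+1)^-(2m+2)`. Off the diagonal, partial
fractions turn the sum over `b` of `(-1)^b (2b+1)/((2b+1)² - (2a+1)²)` into a difference of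
partial sums `A(n)` of the alternating harmonic series; this contributes `-1/2 ∑ (2a+1)^-(2m+2)`
plus a remainder `1/2 ∑_a (2a+1)^-(2m+1) (A(a+N) - A(N-1-a))`. The alternating series bound
`|A(q) - A(p)| ≤ 1/(p+1)` makes the remainder `O(log N / N)`, so it vanishes in the limit.
-/

open Filter Topology

lemma neg_one_pow_mul_self {R : Type*} [Monoid R] [HasDistribNeg R] (n : ℕ) :
    (-1 : R) ^ n * (-1) ^ n = 1 := by
  rw [← pow_add, Even.neg_one_pow ⟨n, rfl⟩]

noncomputable def altHarmonic (n : ℕ) : ℝ := ∑ i ∈ range n, (-1) ^ i / (i + 1)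

lemma sum_range_neg_one_pow_mul_mem_Icc {f : ℕ → ℝ} (hf : Antitone f) (hf0 : ∀ i, 0 ≤ f i)
    (n : ℕ) : ∑ i ∈ range n, (-1) ^ i * f i ∈ Set.Icc 0 (f 0) := by
  induction n generalizing f with
  | zero => simpa using hf0 0
  | succ n ih =>
    have htail := ih (f := fun i => f (i + 1)) (fun i j hij => hf (by omega)) (fun i => hf0 _)
    simp only [sum_range_succ', pow_succ, mul_neg_one, neg_mul, sum_neg_distrib, pow_zero,
      one_mul]
    constructor <;> linarith [htail.1, htail.2, hf (Nat.zero_le 1)]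

lemma altHarmonic_succ (n : ℕ) :
    altHarmonic (n + 1) = altHarmonic n + (-1) ^ n / (n + 1) :=
  sum_range_succ _ n

lemma altHarmonic_add (p n : ℕ) :
    altHarmonic (p + n) =
      altHarmonic p + (-1) ^ p * ∑ i ∈ range n, (-1) ^ i / ((i : ℝ) + p + 1) := by
  rw [altHarmonic, altHarmonic, sum_range_add, mul_sum]
  congr 1
  refine sum_congr rfl fun i _ => ?_
  push_cast
  ring

lemma abs_altHarmonic_sub_le {p q : ℕ} (h : p ≤ q) :
    |altHarmonic q - altHarmonic p| ≤ 1 / (p + 1) := by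
  obtain ⟨n, rfl⟩ := Nat.exists_eq_add_of_le h
  have hf : Antitone fun i : ℕ => 1 / ((i : ℝ) + p + 1) := fun i j hij =>
    one_div_le_one_div_of_le (by positivity) (by gcongr)
  obtain ⟨hlow, hupp⟩ := sum_range_neg_one_pow_mul_mem_Icc hf (fun i => by positivity) n
  simp only [mul_one_div, CharP.cast_eq_zero, zero_add] at hlow hupp
  rw [altHarmonic_add, add_sub_cancel_left, abs_mul, abs_pow, abs_neg, abs_one, one_pow, one_mul,
    abs_of_nonneg hlow]
  exact hupp

lemma sum_range_neg_one_pow_div_add (a n : ℕ) :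
    ∑ b ∈ range n, (-1) ^ b / ((b : ℝ) + a + 1) =
      (-1) ^ a * (altHarmonic (a + n) - altHarmonic a) := by
  rw [altHarmonic_add, add_sub_cancel_left, ← mul_assoc, neg_one_pow_mul_self, one_mul]

lemma sum_range_neg_one_pow_div_sub (a n : ℕ) :
    ∑ b ∈ range (a + n + 1), (-1) ^ b / ((b : ℝ) - a) =
      (-1) ^ a * (altHarmonic a - altHarmonic n) := by
  induction a with
  | zero =>
    simp [sum_range_succ', altHarmonic, pow_succ, neg_div]
  | succ a ih =>
    rw [show a + 1 + n + 1 = a + n + 1 + 1 by ring, sum_range_succ']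
    have hterm : ∀ b ∈ range (a + n + 1),
        (-1 : ℝ) ^ (b + 1) / (((b + 1 : ℕ) : ℝ) - ((a + 1 : ℕ) : ℝ)) =
          -((-1) ^ b / ((b : ℝ) - a)) := by
      intro b _
      push_cast
      ring
    rw [sum_congr rfl hterm, sum_neg_distrib, ih, altHarmonic_succ]
    push_cast
    rw [zero_sub, div_neg]
    linear_combination (1 / ((a : ℝ) + 1)) * neg_one_pow_mul_self (R := ℝ) a

-- At `b = a` the left side is `0` (division by zero), whence the correction term.
lemma two_mul_add_one_div_sq_sub_sq (a b : ℕ) :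
    (2 * (b : ℝ) + 1) / ((2 * (b : ℝ) + 1) ^ 2 - (2 * (a : ℝ) + 1) ^ 2) =
      (1 / ((b : ℝ) - a) + 1 / ((b : ℝ) + a + 1) -
        if b = a then 1 / (2 * (a : ℝ) + 1) else 0) / 4 := by
  split_ifs with hba
  · subst hba
    field_simp
    ring
  · have hsub : (b : ℝ) - a ≠ 0 := sub_ne_zero.mpr (by exact_mod_cast hba)
    have hfac : (2 * (b : ℝ) + 1) ^ 2 - (2 * (a : ℝ) + 1) ^ 2 =
        4 * ((b - a) * (b + a + 1)) := by
      ring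
    rw [hfac]
    field_simp
    ring

lemma sum_range_neg_one_pow_mul_odd_div_sq_sub_sq (a n : ℕ) :
    ∑ b ∈ range (a + n + 1),
        (-1) ^ b * (2 * (b : ℝ) + 1) / ((2 * (b : ℝ) + 1) ^ 2 - (2 * (a : ℝ) + 1) ^ 2) =
      (-1) ^ a / 4 * (altHarmonic (a + (a + n + 1)) - altHarmonic n - 1 / (2 * a + 1)) := by
  have hterm : ∀ b : ℕ,
      (-1) ^ b * (2 * (b : ℝ) + 1) / ((2 * (b : ℝ) + 1) ^ 2 - (2 * (a : ℝ) + 1) ^ 2) =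
        ((-1) ^ b / ((b : ℝ) - a) + (-1) ^ b / ((b : ℝ) + a + 1) -
          if b = a then (-1) ^ a / (2 * (a : ℝ) + 1) else 0) / 4 := by
    intro b
    rw [mul_div_assoc, two_mul_add_one_div_sq_sub_sq]
    split_ifs with hba
    · subst hba; ring
    · ring
  simp only [hterm, ← sum_div, sum_sub_distrib, sum_add_distrib, sum_ite_eq', mem_range,
    if_pos (by omega : a < a + n + 1), sum_range_neg_one_pow_div_add, sum_range_neg_one_pow_div_sub]
  ring

lemma sum_range_pow_odd_mul_pow_odd_mul_sub {R : Type*} [CommRing R] (u v : R) (m : ℕ) :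
    (∑ k ∈ range (m + 1), u ^ (2 * k + 1) * v ^ (2 * (m - k) + 1)) * (u ^ 2 - v ^ 2) =
      u * v * (u ^ (2 * m + 2) - v ^ (2 * m + 2)) := by
  have hterm : ∀ k ∈ range (m + 1), u ^ (2 * k + 1) * v ^ (2 * (m - k) + 1) =
      u * v * ((u ^ 2) ^ k * (v ^ 2) ^ (m + 1 - 1 - k)) := by
    intro k _
    rw [Nat.add_sub_cancel, ← pow_mul, ← pow_mul]
    ring
  rw [sum_congr rfl hterm, ← mul_sum, mul_assoc, geom_sum₂_mul, ← pow_mul, ← pow_mul]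
  ring

lemma sum_range_one_div_pow_odd_mul_one_div_pow_odd {K : Type*} [Field K] {X Y : K}
    (hX : X ≠ 0) (hY : Y ≠ 0) (hXY : X ^ 2 ≠ Y ^ 2) (m : ℕ) :
    ∑ k ∈ range (m + 1), 1 / X ^ (2 * k + 1) * (1 / Y ^ (2 * (m - k) + 1)) =
      Y / X ^ (2 * m + 1) / (Y ^ 2 - X ^ 2) + X / Y ^ (2 * m + 1) / (X ^ 2 - Y ^ 2) := by
  have hsub : X⁻¹ ^ 2 - Y⁻¹ ^ 2 ≠ 0 := by
    rw [sub_ne_zero, inv_pow, inv_pow]; exact fun h => hXY (inv_injective h)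
  simp only [one_div, ← inv_pow]
  rw [eq_div_of_mul_eq hsub (sum_range_pow_odd_mul_pow_odd_mul_sub _ _ m)]
  have hYX : Y ^ 2 - X ^ 2 ≠ 0 := sub_ne_zero.mpr (Ne.symm hXY)
  have hXY' : X ^ 2 - Y ^ 2 ≠ 0 := sub_ne_zero.mpr hXY
  simp only [inv_pow]
  field_simp
  ring

lemma sum_range_one_div_pow_odd_mul_self {K : Type*} [Field K] (X : K) (m : ℕ) :
    ∑ k ∈ range (m + 1), 1 / X ^ (2 * k + 1) * (1 / X ^ (2 * (m - k) + 1)) =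
      (m + 1) / X ^ (2 * m + 2) := by
  have hterm : ∀ k ∈ range (m + 1),
      1 / X ^ (2 * k + 1) * (1 / X ^ (2 * (m - k) + 1)) = 1 / X ^ (2 * m + 2) := by
    intro k hk
    rw [one_div_mul_one_div, ← pow_add, show 2 * k + 1 + (2 * (m - k) + 1) = 2 * m + 2 by
      have := mem_range.mp hk; omega]
  rw [sum_congr rfl hterm, sum_const, card_range, nsmul_eq_mul]
  push_cast
  ring

noncomputable def betaPartialSum (N j : ℕ) : ℝ :=
  ∑ n ∈ range N, (-1) ^ n / (2 * (n : ℝ) + 1) ^ (2 * j + 1)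

noncomputable def crossTerm (m a b : ℕ) : ℝ :=
  (-1) ^ a / (2 * (a : ℝ) + 1) ^ (2 * m + 1) *
    ((-1) ^ b * (2 * (b : ℝ) + 1) / ((2 * (b : ℝ) + 1) ^ 2 - (2 * (a : ℝ) + 1) ^ 2))

lemma sum_range_convolution_eq_ite_add_crossTerm (m a b : ℕ) :
    ∑ k ∈ range (m + 1), (-1) ^ a / (2 * (a : ℝ) + 1) ^ (2 * k + 1) *
        ((-1) ^ b / (2 * (b : ℝ) + 1) ^ (2 * (m - k) + 1)) =
      (if a = b then (m + 1) / (2 * (a : ℝ) + 1) ^ (2 * m + 2) else 0) +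
        crossTerm m a b + crossTerm m b a := by
  have hterm : ∀ k : ℕ, (-1) ^ a / (2 * (a : ℝ) + 1) ^ (2 * k + 1) *
      ((-1) ^ b / (2 * (b : ℝ) + 1) ^ (2 * (m - k) + 1)) = (-1) ^ a * (-1) ^ b *
        (1 / (2 * (a : ℝ) + 1) ^ (2 * k + 1) * (1 / (2 * (b : ℝ) + 1) ^ (2 * (m - k) + 1))) :=
    fun k => by ring
  simp only [hterm, ← mul_sum]
  split_ifs with hab
  · subst hab
    rw [sum_range_one_div_pow_odd_mul_self, neg_one_pow_mul_self]
    simp [crossTerm]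
  · have hX : (2 * (a : ℝ) + 1) ≠ 0 := by positivity
    have hY : (2 * (b : ℝ) + 1) ≠ 0 := by positivity
    have hXY : (2 * (a : ℝ) + 1) ^ 2 ≠ (2 * (b : ℝ) + 1) ^ 2 := by
      rw [Ne, pow_left_inj₀ (by positivity) (by positivity) two_ne_zero]
      exact fun h => hab (by exact_mod_cast (by linarith : (a : ℝ) = b))
    rw [sum_range_one_div_pow_odd_mul_one_div_pow_odd hX hY hXY, crossTerm, crossTerm]
    generalize 2 * (a : ℝ) + 1 = X
    generalize 2 * (b : ℝ) + 1 = Y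
    ring

lemma sum_range_crossTerm {m a N : ℕ} (h : a < N) :
    ∑ b ∈ range N, crossTerm m a b =
      (1 / (2 * (a : ℝ) + 1) ^ (2 * m + 1) * (altHarmonic (a + N) - altHarmonic (N - 1 - a)) -
        1 / (2 * (a : ℝ) + 1) ^ (2 * m + 2)) / 4 := by
  obtain ⟨n, rfl⟩ := Nat.exists_eq_add_of_lt h
  simp only [crossTerm, ← mul_sum, sum_range_neg_one_pow_mul_odd_div_sq_sub_sq,
    show a + n + 1 - 1 - a = n by omega]
  generalize 2 * (a : ℝ) + 1 = X
  linear_combination (altHarmonic (a + (a + n + 1)) - altHarmonic n - 1 / X) /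
    (4 * X ^ (2 * m + 1)) * neg_one_pow_mul_self (R := ℝ) a

noncomputable def convolutionRemainder (m N : ℕ) : ℝ :=
  ∑ a ∈ range N, 1 / (2 * (a : ℝ) + 1) ^ (2 * m + 1) *
    (altHarmonic (a + N) - altHarmonic (N - 1 - a))

lemma sum_range_betaPartialSum_mul (m N : ℕ) :
    ∑ k ∈ range (m + 1), betaPartialSum N k * betaPartialSum N (m - k) =
      ((m : ℝ) + 1 / 2) * ∑ a ∈ range N, 1 / (2 * (a : ℝ) + 1) ^ (2 * m + 2) +
        convolutionRemainder m N / 2 := by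
  have hdiag : ∑ a ∈ range N, ∑ b ∈ range N,
      (if a = b then ((m : ℝ) + 1) / (2 * (a : ℝ) + 1) ^ (2 * m + 2) else 0) =
        ((m : ℝ) + 1) * ∑ a ∈ range N, 1 / (2 * (a : ℝ) + 1) ^ (2 * m + 2) := by
    rw [mul_sum]
    refine sum_congr rfl fun a ha => ?_
    rw [sum_ite_eq, if_pos ha, mul_one_div]
  have hcross : ∑ a ∈ range N, ∑ b ∈ range N, crossTerm m a b =
      ∑ a ∈ range N, (1 / (2 * (a : ℝ) + 1) ^ (2 * m + 1) *
        (altHarmonic (a + N) - altHarmonic (N - 1 - a)) -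
          1 / (2 * (a : ℝ) + 1) ^ (2 * m + 2)) / 4 :=
    sum_congr rfl fun a ha => sum_range_crossTerm (mem_range.mp ha)
  simp only [betaPartialSum, sum_mul_sum]
  rw [sum_comm, sum_congr rfl fun a _ => sum_comm]
  simp only [sum_range_convolution_eq_ite_add_crossTerm, sum_add_distrib]
  rw [hdiag, sum_comm (f := fun a b => crossTerm m b a), hcross, ← sum_div, sum_sub_distrib,
    convolutionRemainder]
  ring

lemma sum_range_one_div_add_one (N : ℕ) :
    ∑ a ∈ range N, 1 / ((a : ℝ) + 1) = harmonic N := by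
  simp [harmonic]

lemma abs_convolutionRemainder_le (m N : ℕ) :
    |convolutionRemainder m N| ≤ 2 * harmonic N / (N + 1) := by
  have hterm : ∀ a ∈ range N,
      |1 / (2 * (a : ℝ) + 1) ^ (2 * m + 1) * (altHarmonic (a + N) - altHarmonic (N - 1 - a))| ≤
        (1 / ((a : ℝ) + 1) + 1 / ((N - 1 - a : ℕ) + 1)) / (N + 1) := by
    intro a ha
    have hN : (N : ℝ) = a + (N - 1 - a : ℕ) + 1 := by
      have := mem_range.mp ha; exact_mod_cast (by omega : N = a + (N - 1 - a) + 1)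
    have ha0 : (0 : ℝ) ≤ a := a.cast_nonneg
    have hpow : 1 / (2 * (a : ℝ) + 1) ^ (2 * m + 1) ≤ 1 / ((a : ℝ) + 1) :=
      one_div_le_one_div_of_le (by positivity) ((by linarith : (a : ℝ) + 1 ≤ 2 * a + 1).trans
        (le_self_pow₀ (by linarith) (by omega)))
    have htail := abs_altHarmonic_sub_le (by omega : N - 1 - a ≤ a + N)
    calc _ = 1 / (2 * (a : ℝ) + 1) ^ (2 * m + 1) *
            |altHarmonic (a + N) - altHarmonic (N - 1 - a)| := by
          rw [abs_mul, abs_of_pos (by positivity)]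
      _ ≤ 1 / ((a : ℝ) + 1) * (1 / ((N - 1 - a : ℕ) + 1)) := by gcongr
      _ = _ := by
          rw [hN]
          field_simp
          ring
  calc |convolutionRemainder m N|
        ≤ ∑ a ∈ range N, (1 / ((a : ℝ) + 1) + 1 / ((N - 1 - a : ℕ) + 1)) / (N + 1) :=
          (abs_sum_le_sum_abs _ _).trans (sum_le_sum hterm)
    _ = 2 * harmonic N / (N + 1) := by
        rw [← sum_div, sum_add_distrib, sum_range_reflect (fun a => 1 / ((a : ℝ) + 1)) N,
          sum_range_one_div_add_one]
        ring

lemma tendsto_convolutionRemainder (m : ℕ) : Tendsto (convolutionRemainder m) atTop (𝓝 0) := by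
  have hlog : Tendsto (fun N : ℕ => 2 * ((1 + Real.log N) / (N + 1))) atTop (𝓝 0) := by
    have := (tendsto_one_div_add_atTop_nhds_zero_nat (𝕜 := ℝ)).add
      ((tendsto_pow_log_div_mul_add_atTop 1 1 1 one_ne_zero).comp tendsto_natCast_atTop_atTop)
    simpa [add_div] using this.const_mul 2
  refine squeeze_zero_norm (fun N => ?_) hlog
  rw [Real.norm_eq_abs, ← mul_div_assoc]
  exact (abs_convolutionRemainder_le m N).trans (by gcongr; exact harmonic_le_one_add_log N)

lemma summable_one_div_two_mul_add_one_pow {j : ℕ} (hj : 1 < j) :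
    Summable fun n : ℕ => 1 / (2 * (n : ℝ) + 1) ^ j := by
  refine ((summable_nat_add_iff 1).mpr (Real.summable_one_div_nat_pow.mpr hj)).of_nonneg_of_le
    (fun n => by positivity) fun n => ?_
  push_cast
  gcongr
  linarith [n.cast_nonneg (α := ℝ)]

/-- Williams' convolution identity: `∑_{k=0}^m β(2k+1) β(2m-2k+1) = (m + 1/2) λ(2m+2)`,
where `β j` denotes the value `β(2j+1) = ∑_{n=0}^∞ (-1)^n/(2n+1)^{2j+1}` of the Dirichlet
beta function, given as the limit of the partial sums of the (possibly only conditionally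
convergent) alternating series. -/
theorem beta_convolution (m : ℕ) (β : ℕ → ℝ)
    (hβ : ∀ j : ℕ, Filter.Tendsto
      (fun N : ℕ => ∑ n ∈ Finset.range N, (-1 : ℝ) ^ n / (2 * (n : ℝ) + 1) ^ (2 * j + 1))
      Filter.atTop (nhds (β j))) :
    ∑ k ∈ Finset.range (m + 1), β k * β (m - k) =
      ((m : ℝ) + 1 / 2) * dirichletLambda (2 * m + 2) := by
  set conv := fun N => ∑ k ∈ range (m + 1), betaPartialSum N k * betaPartialSum N (m - k)
  have hconv_beta : Tendsto conv atTop (𝓝 (∑ k ∈ range (m + 1), β k * β (m - k))) :=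
    tendsto_finsetSum _ fun k _ => (hβ k).mul (hβ (m - k))
  have hconv_lambda : Tendsto conv atTop
      (𝓝 (((m : ℝ) + 1 / 2) * dirichletLambda (2 * m + 2) + 0 / 2)) := by
    have hlambda :=
      (summable_one_div_two_mul_add_one_pow (j := 2 * m + 2) (by omega)).hasSum.tendsto_sum_nat
    simp only [conv, sum_range_betaPartialSum_mul]
    exact (hlambda.const_mul _).add ((tendsto_convolutionRemainder m).div_const 2)
  simpa using tendsto_nhds_unique hconv_beta hconv_lambda
end

section
/- Let m be a positive integer. Then Σ_{k=0}^{m} 2^{-2k} · ζ(2k) · λ(2m-2k+2) = 0, where ζ is the Riemann zeta function (so in particular ζ(0) = -1/2 and, for k ≥ 1, ζ(2k) = Σ_{n=1}^∞ 1/n^{2k}). -/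
open Real Finset

/-!
Write `b n = bernoulli n / n!`. Euler's formula `ζ(2k) = (-1)^(k+1) (2π)^(2k) b(2k) / 2` holds for
every `k ≥ 0` (at `k = 0` it is `ζ(0) = -1/2`), and `λ(2j) = (1 - 4^(-j)) ζ(2j)`. After taking out
the factor `(-1)^(m+1) π^(2m+2) / 4`, the sum becomes `∑_{k+j=m+1} (4^j - 1) b(2k) b(2j)`. This is
the coefficient of `x^(2m+2)` in `E(x) E(2x) - E(x)^2 - x^2`, where `E(x) = x coth(x/2)`, and that
series vanishes by the double-angle formula `2 coth x coth(x/2) = coth(x/2)^2 + 1`.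
-/

open scoped Nat

section BernoulliConvolution

open PowerSeries

theorem coeff_two_mul_mul_of_odd_coeff_eq_zero {R : Type*} [CommSemiring R] {P : R⟦X⟧}
    (hP : ∀ n, Odd n → coeff n P = 0) (Q : R⟦X⟧) (n : ℕ) :
    coeff (2 * n) (P * Q) = ∑ p ∈ antidiagonal n, coeff (2 * p.1) P * coeff (2 * p.2) Q := by
  have hdouble : (antidiagonal n).image (fun p ↦ (2 * p.1, 2 * p.2)) ⊆ antidiagonal (2 * n) := by
    intro p hp
    obtain ⟨q, hq, rfl⟩ := mem_image.mp hp
    rw [HasAntidiagonal.mem_antidiagonal] at hq ⊢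
    omega
  rw [coeff_mul, ← sum_subset hdouble, sum_image]
  · intro p _ q _ h
    simp only [Prod.mk.injEq] at h
    ext <;> omega
  · intro p hp hp_not_double
    rw [HasAntidiagonal.mem_antidiagonal] at hp
    suffices Odd p.1 by rw [hP _ this, zero_mul]
    refine Nat.not_even_iff_odd.mp fun ⟨a, ha⟩ ↦ hp_not_double ?_
    exact mem_image.mpr ⟨(a, n - a), HasAntidiagonal.mem_antidiagonal.mpr (by omega),
      by ext <;> simp <;> omega⟩

/-- The series of `x coth (x/2) = 2x/(e^x - 1) + x`. -/
noncomputable def xCothHalfSeries : ℚ⟦X⟧ := 2 * bernoulliPowerSeries ℚ + X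

theorem coeff_xCothHalfSeries (n : ℕ) :
    coeff n xCothHalfSeries = 2 * (bernoulli n / n !) + if n = 1 then 1 else 0 := by
  rw [xCothHalfSeries, ← map_ofNat C, map_add, coeff_C_mul, coeff_X]
  simp [bernoulliPowerSeries]

theorem coeff_xCothHalfSeries_of_odd {n : ℕ} (hn : Odd n) : coeff n xCothHalfSeries = 0 := by
  rcases eq_or_ne n 1 with rfl | h1
  · norm_num [coeff_xCothHalfSeries]
  · rw [coeff_xCothHalfSeries, bernoulli_eq_bernoulli'_of_ne_one h1,
      bernoulli'_eq_zero_of_odd hn (by obtain ⟨k, rfl⟩ := hn; omega)]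
    simp [h1]

theorem coeff_two_mul_xCothHalfSeries (k : ℕ) :
    coeff (2 * k) xCothHalfSeries = 2 * (bernoulli (2 * k) / (2 * k)!) := by
  simp [coeff_xCothHalfSeries, show 2 * k ≠ 1 by omega]

theorem xCothHalfSeries_mul_rescale_two :
    xCothHalfSeries * rescale 2 xCothHalfSeries = xCothHalfSeries ^ 2 + X ^ 2 := by
  set B := bernoulliPowerSeries ℚ
  set u := exp ℚ - 1
  have hu : u ≠ 0 := fun h ↦ by simpa [u, coeff_exp] using congrArg (coeff 1) h
  have hB : B * u = X := bernoulliPowerSeries_mul_exp_sub_one ℚ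
  have hB₂ : rescale 2 B * (u * (u + 2)) = 2 * X := by
    have := congrArg (rescale (2 : ℚ)) hB
    rw [map_mul, map_sub, map_one, rescale_X, show (2 : ℚ) = (2 : ℕ) by norm_num,
      ← exp_pow_eq_rescale_exp] at this
    simp only [Nat.cast_ofNat, map_ofNat] at this
    linear_combination this
  refine mul_right_cancel₀ (pow_ne_zero 2 hu) ?_
  simp only [xCothHalfSeries, map_add, map_mul, map_ofNat, rescale_X]
  linear_combination 2 * X * hB₂ +
    (2 * u * (2 * rescale 2 B + 2 * X) - 4 * X * (u + 2) - 4 * (B * u - X)) * hB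

theorem sum_antidiagonal_four_pow_sub_one_mul_bernoulli {n : ℕ} (hn : n ≠ 1) :
    ∑ p ∈ antidiagonal n, ((4 : ℚ) ^ p.2 - 1) *
      (bernoulli (2 * p.1) / (2 * p.1)! * (bernoulli (2 * p.2) / (2 * p.2)!)) = 0 := by
  have h := congrArg (coeff (2 * n)) xCothHalfSeries_mul_rescale_two
  rw [sq, map_add, coeff_X_pow, if_neg (by omega),
    coeff_two_mul_mul_of_odd_coeff_eq_zero (fun _ ↦ coeff_xCothHalfSeries_of_odd),
    coeff_two_mul_mul_of_odd_coeff_eq_zero (fun _ ↦ coeff_xCothHalfSeries_of_odd)] at h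
  simp only [coeff_rescale, coeff_two_mul_xCothHalfSeries, add_zero] at h
  rw [← sub_eq_zero, ← sum_sub_distrib] at h
  rw [← mul_right_inj' (four_ne_zero' ℚ), mul_zero, mul_sum, ← h]
  refine sum_congr rfl fun p _ ↦ ?_
  rw [pow_mul]
  ring

end BernoulliConvolution

theorem dirichletLambda_eq_mul_tsum {j : ℕ} (hj : 1 < j) :
    dirichletLambda j = (1 - (2 ^ j)⁻¹) * ∑' n : ℕ, 1 / (n : ℝ) ^ j := by
  have hsum : Summable fun n : ℕ ↦ 1 / (n : ℝ) ^ j := Real.summable_one_div_nat_pow.mpr hj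
  have hsplit := tsum_even_add_odd (f := fun n : ℕ ↦ 1 / (n : ℝ) ^ j)
    (hsum.comp_injective (mul_right_injective₀ two_ne_zero))
    (hsum.comp_injective ((add_left_injective 1).comp (mul_right_injective₀ two_ne_zero)))
  have heven : ∑' n : ℕ, 1 / ((2 * n : ℕ) : ℝ) ^ j = (2 ^ j)⁻¹ * ∑' n : ℕ, 1 / (n : ℝ) ^ j := by
    rw [← tsum_mul_left]
    congr 1 with n
    push_cast
    rw [mul_pow, one_div, one_div, mul_inv]
  push_cast at hsplit heven
  rw [heven] at hsplit
  rw [dirichletLambda]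
  linear_combination hsplit

theorem dirichletLambda_eq_mul_riemannZeta {j : ℕ} (hj : 1 < j) :
    (dirichletLambda j : ℂ) = (1 - (2 ^ j)⁻¹) * riemannZeta j := by
  rw [dirichletLambda_eq_mul_tsum hj, zeta_nat_eq_tsum_of_gt_one hj, Complex.ofReal_mul,
    Complex.ofReal_tsum]
  push_cast
  rfl

theorem two_zpow_mul_riemannZeta_mul_dirichletLambda {k j : ℕ} (hj : j ≠ 0) :
    (2 : ℂ) ^ (-(2 * (k : ℤ))) * riemannZeta (2 * k) * dirichletLambda (2 * j) =
      (-1) ^ (k + j) * π ^ (2 * (k + j)) / 4 *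
        (((4 ^ j - 1) * (bernoulli (2 * k) / (2 * k)! * (bernoulli (2 * j) / (2 * j)!)) : ℚ) :
          ℂ) := by
  rw [dirichletLambda_eq_mul_riemannZeta (by omega), Nat.cast_mul, Nat.cast_two,
    riemannZeta_two_mul_nat', riemannZeta_two_mul_nat']
  have htwo_zpow_odd : ∀ i : ℕ, (2 : ℂ) ^ (2 * (i : ℤ) - 1) = 4 ^ i / 2 := fun i ↦ by
    rw [zpow_sub₀ two_ne_zero, zpow_mul]; norm_num
  have htwo_zpow_neg : (2 : ℂ) ^ (-(2 * (k : ℤ))) = (4 ^ k)⁻¹ := by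
    rw [zpow_neg, zpow_mul]; norm_num
  rw [htwo_zpow_odd, htwo_zpow_odd, htwo_zpow_neg, pow_mul 2 2 j]
  push_cast
  field_simp
  ring

theorem zeta_lambda_convolution (m : ℕ) (hm : 0 < m) :
    ∑ k ∈ Finset.range (m + 1),
      (2 : ℂ) ^ (-(2 * (k : ℤ))) * riemannZeta (2 * (k : ℂ)) *
        (dirichletLambda (2 * m - 2 * k + 2) : ℂ) = 0 := by
  have hB := sum_antidiagonal_four_pow_sub_one_mul_bernoulli (n := m + 1) (by omega)
  rw [Nat.sum_antidiagonal_eq_sum_range_succ_mk, sum_range_succ, Nat.sub_self, pow_zero, sub_self,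
    zero_mul, add_zero] at hB
  calc _ = ∑ k ∈ range (m + 1), (-1) ^ (m + 1) * π ^ (2 * (m + 1)) / 4 *
        ((((4 : ℚ) ^ (m + 1 - k) - 1) * (bernoulli (2 * k) / (2 * k)! *
          (bernoulli (2 * (m + 1 - k)) / (2 * (m + 1 - k))!)) : ℚ) : ℂ) := by
        refine sum_congr rfl fun k hk ↦ ?_
        rw [mem_range] at hk
        rw [show 2 * m - 2 * k + 2 = 2 * (m + 1 - k) by omega,
          two_zpow_mul_riemannZeta_mul_dirichletLambda (by omega), Nat.add_sub_cancel' hk.le]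
    _ = 0 := by rw [← mul_sum, ← Rat.cast_sum, hB, Rat.cast_zero, mul_zero]
end

section
/- Let s be a complex number with Re(s) > 1. Then Σ_{n=0}^∞ 1/(2n+1)^s = (1/Γ(s)) · ∫_0^∞ e^t · t^{s-1}/(e^{2t} - 1) dt, where Γ is the Gamma function, t^{s-1} = exp((s-1)·log t) for real t > 0, and the series on the left converges absolutely. -/
open Real MeasureTheory Asymptotics Filter Topology Set

/-!
Expanding `e^t / (e^{2t} - 1) = 1 / (2 sinh t)` as the geometric series `∑ e^{-(2n+1)t}` and
integrating termwise against `t^{s-1}` gives `∑ Γ(s) / (2n+1)^s`; the termwise integration is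
justified by the convergence of `∑ (2n+1)^{-Re s}`. Since `1 / (2 sinh t)` is `O(1/t)` at `0` and
`O(e^{-t})` at `∞`, its Mellin transform converges for `Re s > 1`.
-/

noncomputable def lambdaKernel (t : ℝ) : ℝ := (2 * sinh t)⁻¹

lemma lambdaKernel_eq_exp_div (t : ℝ) : lambdaKernel t = rexp t / (rexp (2 * t) - 1) := by
  have h : rexp (2 * t) - 1 = rexp t * (rexp t - rexp (-t)) := by
    rw [mul_sub, ← exp_add, ← exp_add, two_mul, add_neg_cancel, exp_zero]
  rw [lambdaKernel, sinh_eq, h, div_mul_cancel_left₀ (exp_ne_zero t)]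
  ring

lemma lambdaKernel_pos {t : ℝ} (ht : 0 < t) : 0 < lambdaKernel t := by
  have := sinh_pos_iff.mpr ht
  unfold lambdaKernel
  positivity

lemma hasSum_exp_neg_odd_mul {t : ℝ} (ht : 0 < t) :
    HasSum (fun n : ℕ => rexp (-(2 * n + 1) * t)) (lambdaKernel t) := by
  set x := rexp (-t)
  have hx0 : 0 < x := exp_pos _
  have hx1 : x < 1 := exp_lt_one_iff.mpr (by linarith)
  have hterm (n : ℕ) : rexp (-(2 * n + 1) * t) = x * (x ^ 2) ^ n := by
    rw [← pow_mul, ← pow_succ', ← exp_nat_mul]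
    push_cast
    ring_nf
  have hsum : x * (1 - x ^ 2)⁻¹ = lambdaKernel t := by
    rw [lambdaKernel, sinh_eq, show rexp (-t) = x from rfl,
      show rexp t = x⁻¹ by simp [x, exp_neg]]
    have : 1 - x ^ 2 ≠ 0 := by nlinarith
    field_simp
  simp_rw [hterm, ← hsum]
  exact (hasSum_geometric_of_lt_one (sq_nonneg x) (by nlinarith)).mul_left x

lemma lambdaKernel_isBigO_nhdsGT_zero : lambdaKernel =O[𝓝[>] 0] (· ^ (-1 : ℝ)) := by
  refine IsBigO.of_bound 1 ?_
  filter_upwards [self_mem_nhdsWithin] with t (ht : 0 < t)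
  have hsinh : t ≤ sinh t := self_le_sinh_iff.mpr ht.le
  rw [norm_of_nonneg (lambdaKernel_pos ht).le, norm_of_nonneg (by positivity), rpow_neg_one,
    one_mul, lambdaKernel]
  gcongr
  linarith

lemma lambdaKernel_isBigO_atTop : lambdaKernel =O[atTop] fun t => rexp (-t) := by
  refine IsBigO.of_bound 2 ?_
  filter_upwards [eventually_ge_atTop 1] with t ht
  have h2 : 2 ≤ rexp t := by linarith [add_one_le_exp t]
  rw [norm_of_nonneg (lambdaKernel_pos (by linarith)).le, norm_of_nonneg (exp_pos _).le,
    lambdaKernel_eq_exp_div, exp_neg, two_mul t, exp_add, div_le_iff₀ (by nlinarith)]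
  field_simp
  nlinarith

lemma continuousOn_lambdaKernel : ContinuousOn lambdaKernel (Ioi 0) :=
  (continuous_const.mul continuous_sinh).continuousOn.inv₀ fun _ ht =>
    mul_ne_zero two_ne_zero (sinh_pos_iff.mpr ht).ne'

lemma summable_one_div_odd_rpow {σ : ℝ} (hσ : 1 < σ) :
    Summable fun n : ℕ => 1 / (2 * n + 1 : ℝ) ^ σ := by
  have := (summable_one_div_nat_rpow.mpr hσ).comp_injective
    (i := fun n : ℕ => 2 * n + 1) fun m n h => by simpa using h
  simpa [Function.comp_def] using this

lemma mellinConvergent_lambdaKernel {s : ℂ} (hs : 1 < s.re) :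
    MellinConvergent (fun t => (lambdaKernel t : ℂ)) s :=
  mellinConvergent_of_isBigO_rpow_exp one_pos
    ((Complex.continuous_ofReal.comp_continuousOn continuousOn_lambdaKernel).locallyIntegrableOn
      measurableSet_Ioi)
    (by simpa using Complex.isBigO_ofReal_left.mpr lambdaKernel_isBigO_atTop)
    (Complex.isBigO_ofReal_left.mpr lambdaKernel_isBigO_nhdsGT_zero) hs

lemma hasSum_mellin_lambdaKernel {s : ℂ} (hs : 1 < s.re) :
    HasSum (fun n : ℕ => Complex.Gamma s / (2 * n + 1) ^ s)
      (mellin (fun t => (lambdaKernel t : ℂ)) s) := by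
  have hseries (t : ℝ) (ht : t ∈ Ioi 0) :
      HasSum (fun n : ℕ => (1 : ℂ) * rexp (-(2 * n + 1) * t)) (lambdaKernel t : ℂ) := by
    simpa using Complex.hasSum_ofReal.mpr (hasSum_exp_neg_odd_mul ht)
  simpa using hasSum_mellin (p := fun n : ℕ => 2 * n + 1) (fun n => .inr (by positivity))
    (by linarith) hseries (by simpa using summable_one_div_odd_rpow hs)

theorem lambda_integral_representation (s : ℂ) (hs : 1 < s.re) :
    Summable (fun n : ℕ => 1 / (2 * (n : ℂ) + 1) ^ s) ∧
      IntegrableOn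
        (fun t : ℝ => Complex.exp t * (t : ℂ) ^ (s - 1) / (Complex.exp (2 * t) - 1))
        (Set.Ioi 0) ∧
      ∑' n : ℕ, 1 / (2 * (n : ℂ) + 1) ^ s =
        (1 / Complex.Gamma s) *
          ∫ t in Set.Ioi (0 : ℝ),
            Complex.exp t * (t : ℂ) ^ (s - 1) / (Complex.exp (2 * t) - 1) := by
  have hΓ : Complex.Gamma s ≠ 0 := Complex.Gamma_ne_zero_of_re_pos (by linarith)
  have hintegrand : (fun t : ℝ => Complex.exp t * (t : ℂ) ^ (s - 1) / (Complex.exp (2 * t) - 1))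
      = fun t : ℝ => (t : ℂ) ^ (s - 1) • (lambdaKernel t : ℂ) := by
    ext t
    rw [lambdaKernel_eq_exp_div, smul_eq_mul]
    push_cast
    ring
  have hsum : HasSum (fun n : ℕ => 1 / (2 * (n : ℂ) + 1) ^ s)
      (1 / Complex.Gamma s * mellin (fun t => (lambdaKernel t : ℂ)) s) := by
    simpa [← mul_div_assoc, inv_mul_cancel₀ hΓ] using
      (hasSum_mellin_lambdaKernel hs).mul_left (1 / Complex.Gamma s)
  rw [hintegrand]
  exact ⟨hsum.summable, mellinConvergent_lambdaKernel hs, hsum.tsum_eq⟩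
end
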